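/- Let G be a group, H a subgroup of G, and T a subgroup of H such that for every g ∈ G with g⁻¹Tg ⊆ H there exists h ∈ H with g⁻¹Tg = h⁻¹Th. Assume the Weyl group W_G = N_G(T)/T is finite. Then the set of fixed points of the left-translation action of T on G/H is finite, and its cardinality multiplied by the cardinality of W_H = N_H(T)/T equals the cardinality of W_G; that is, the number of fixed points equals |W_G|/|W_H|. -/

import Mathlib

/-!
The normalizer `N = N_G(T)` acts on `G ⧸ H` and preserves the `T`-fixed cosets. If `gH` is
`T`-fixed then `g⁻¹Tg ≤ H`, and the conjugacy hypothesis produces `h ∈ H` with `gh⁻¹ ∈ N`, so the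
fixed cosets form the single `N`-orbit of `1H`, whose stabilizer is `N ⊓ H`. Thus the number of
fixed points is `[N : N ⊓ H]`, and the claim is multiplicativity of the index along
`T ≤ N ⊓ H ≤ N`.
-/

open MulAction Subgroup

namespace Subgroup

variable {G : Type*} [Group G]

theorem smul_coe_quotient {H K : Subgroup G} (k : K) (g : G) :
    k • (g : G ⧸ H) = ((k * g : G) : G ⧸ H) :=
  rfl

theorem stabilizer_coe_one_quotient (H K : Subgroup G) :
    stabilizer K ((1 : G) : G ⧸ H) = H.subgroupOf K := by
  ext k
  rw [mem_subgroupOf]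
  exact SetLike.ext_iff.mp (stabilizer_quotient H) (k : G)

theorem nat_card_orbit_coe_one_quotient (H K : Subgroup G) :
    Nat.card (orbit K ((1 : G) : G ⧸ H)) = H.relIndex K := by
  rw [relIndex, ← stabilizer_coe_one_quotient, index_stabilizer, Nat.card_coe_set_eq]

variable {H T : Subgroup G}

theorem smul_coe_eq_self_of_mem_normalizer (hTH : T ≤ H) {n t : G}
    (hn : n ∈ normalizer (T : Set G)) (ht : t ∈ T) : t • (n : G ⧸ H) = n := by
  rw [MulAction.Quotient.smul_coe, QuotientGroup.eq]
  apply hTH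
  simpa [mul_assoc] using (mem_normalizer_iff''.mp hn t⁻¹).mp (inv_mem ht)

theorem conj_mem_of_forall_smul_coe_eq_self {g : G}
    (hg : ∀ t ∈ T, t • (g : G ⧸ H) = g) : ∀ t ∈ T, g⁻¹ * t * g ∈ H := by
  intro t ht
  have := hg t⁻¹ (inv_mem ht)
  rw [MulAction.Quotient.smul_coe, QuotientGroup.eq] at this
  simpa [mul_assoc] using this

theorem mul_inv_mem_normalizer_of_conj_image_eq {g h : G}
    (h_eq : (fun t => g⁻¹ * t * g) '' (T : Set G) = (fun t => h⁻¹ * t * h) '' (T : Set G)) :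
    g * h⁻¹ ∈ normalizer (T : Set G) := by
  rw [mem_normalizer_iff_conj_image_eq]
  calc MulAut.conj (g * h⁻¹) '' T
      = MulAut.conj g '' ((fun t => h⁻¹ * t * h) '' T) := by
        rw [Set.image_image]; simp [mul_assoc]
    _ = MulAut.conj g '' ((fun t => g⁻¹ * t * g) '' T) := by rw [h_eq]
    _ = T := by rw [Set.image_image]; simp [mul_assoc]

theorem setOf_forall_smul_eq_self_eq_orbit_normalizer (hTH : T ≤ H)
    (hconj : ∀ g : G, (∀ t ∈ T, g⁻¹ * t * g ∈ H) →
      ∃ h ∈ H, (fun t => g⁻¹ * t * g) '' (T : Set G) = (fun t => h⁻¹ * t * h) '' (T : Set G)) :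
    {x : G ⧸ H | ∀ t ∈ T, t • x = x} = orbit (normalizer (T : Set G)) ((1 : G) : G ⧸ H) := by
  ext x
  rw [Set.mem_ofPred_eq, mem_orbit_iff]
  constructor
  · obtain ⟨g, rfl⟩ := QuotientGroup.mk_surjective x
    intro hg
    obtain ⟨h, hh, h_eq⟩ := hconj g (conj_mem_of_forall_smul_coe_eq_self hg)
    refine ⟨⟨g * h⁻¹, mul_inv_mem_normalizer_of_conj_image_eq h_eq⟩, ?_⟩
    rw [smul_coe_quotient, mul_one, QuotientGroup.eq]
    simpa using hh
  · rintro ⟨n, rfl⟩ t ht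
    rw [smul_coe_quotient, mul_one]
    exact smul_coe_eq_self_of_mem_normalizer hTH n.2 ht

end Subgroup

/-- Under the conjugacy property of maximal tori, if the Weyl group
`W_G = N_G(T)/T` is finite, then the fixed-point set of the left-translation action of `T`
on `G/H` is finite and its cardinality times `|W_H|` equals `|W_G|`, where
`W_H = N_H(T)/T` and `N_H(T) = H ⊓ N_G(T)`. -/
theorem card_fixed_points_eq_weyl_quotient {G : Type*} [Group G]
    (H T : Subgroup G) (hTH : T ≤ H)
    (hconj : ∀ g : G, (∀ t ∈ T, g⁻¹ * t * g ∈ H) →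
      ∃ h ∈ H, (fun t => g⁻¹ * t * g) '' (T : Set G) = (fun t => h⁻¹ * t * h) '' (T : Set G))
    (hWG : Finite ((Subgroup.normalizer (T : Set G)) ⧸ T.subgroupOf (Subgroup.normalizer (T : Set G)))) :
    ({x : G ⧸ H | ∀ t ∈ T, (t : G) • x = x}).Finite ∧
    Nat.card {x : G ⧸ H | ∀ t ∈ T, (t : G) • x = x} *
      Nat.card ((H ⊓ (Subgroup.normalizer (T : Set G)) : Subgroup G) ⧸ T.subgroupOf (H ⊓ (Subgroup.normalizer (T : Set G)))) =
      Nat.card ((Subgroup.normalizer (T : Set G)) ⧸ T.subgroupOf (Subgroup.normalizer (T : Set G))) := by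
  set N := normalizer (T : Set G)
  have h_index : T.relIndex (H ⊓ N) * H.relIndex N = T.relIndex N := by
    rw [← inf_relIndex_right H N]
    exact relIndex_mul_relIndex _ _ _ (le_inf hTH le_normalizer) inf_le_right
  have h_card : Nat.card {x : G ⧸ H | ∀ t ∈ T, t • x = x} = H.relIndex N := by
    rw [setOf_forall_smul_eq_self_eq_orbit_normalizer hTH hconj, nat_card_orbit_coe_one_quotient]
  refine ⟨Nat.finite_of_card_ne_zero ?_, ?_⟩
  · have h_WG : T.relIndex N ≠ 0 := (T.subgroupOf N).index_ne_zero_of_finite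
    rw [h_card]
    exact right_ne_zero_of_mul (h_index ▸ h_WG)
  · rw [h_card, mul_comm]
    exact h_index
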